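/- Let β₀ > 0, λ_b > 0 and p ≥ 0, and define F : [0, ∞) → ℝ by F(x) = 1 − exp(−2π·λ_b·(e^(−p)/β₀²)·(1 − β₀·x·e^(−β₀·x) − e^(−β₀·x))). Then F(0) = 0, F is strictly monotone increasing on [0, ∞), F(x) < 1 − exp(−2π·λ_b·e^(−p)/β₀²) for all x ≥ 0, and F(x) tends to 1 − exp(−2π·λ_b·e^(−p)/β₀²) as x tends to +∞. -/

import Mathlib

open Filter

/-- Properties of the CDF `F` of the distance to the nearest LOS base station
(Lemma 2 of the paper). -/
theorem properties_of_F (β₀ lamb p : ℝ) (hβ₀ : 0 < β₀) (hlamb : 0 < lamb) (hp : 0 ≤ p)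
    (F : ℝ → ℝ)
    (hF : F = fun x => 1 - Real.exp (-(2 * Real.pi * lamb * (Real.exp (-p) / β₀ ^ 2) *
      (1 - β₀ * x * Real.exp (-β₀ * x) - Real.exp (-β₀ * x))))) :
    F 0 = 0 ∧
      StrictMonoOn F (Set.Ici (0 : ℝ)) ∧
      (∀ x : ℝ, 0 ≤ x →
        F x < 1 - Real.exp (-(2 * Real.pi * lamb * Real.exp (-p) / β₀ ^ 2))) ∧
      Tendsto F atTop
        (nhds (1 - Real.exp (-(2 * Real.pi * lamb * Real.exp (-p) / β₀ ^ 2)))) := by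
  subst hF
  have pi_pos := Real.pi_pos
  set c : ℝ := 2 * Real.pi * lamb * (Real.exp (-p) / β₀ ^ 2) with hcdef
  have hc : 0 < c := by positivity
  have hceq : 2 * Real.pi * lamb * Real.exp (-p) / β₀ ^ 2 = c := by
    rw [hcdef]; ring
  set g : ℝ → ℝ := fun x => 1 - β₀ * x * Real.exp (-β₀ * x) - Real.exp (-β₀ * x) with hgdef
  -- derivative of g
  have hderiv : ∀ x : ℝ, HasDerivAt g (β₀ ^ 2 * x * Real.exp (-β₀ * x)) x := by
    intro x
    have h0 : HasDerivAt (fun x : ℝ => -β₀ * x) (-β₀) x := by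
      simpa using (hasDerivAt_id x).const_mul (-β₀)
    have h1 : HasDerivAt (fun x : ℝ => Real.exp (-β₀ * x))
        (Real.exp (-β₀ * x) * (-β₀)) x := h0.exp
    have h2 : HasDerivAt (fun x : ℝ => β₀ * x) β₀ x := by
      simpa using (hasDerivAt_id x).const_mul β₀
    have h3 := (h2.mul h1)
    have h4 := ((hasDerivAt_const x (1 : ℝ)).sub h3).sub h1
    refine HasDerivAt.congr_deriv h4 ?_
    ring
  have hgcont : Continuous g := by
    rw [hgdef]; fun_prop
  have hgmono : StrictMonoOn g (Set.Ici (0 : ℝ)) := by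
    apply strictMonoOn_of_deriv_pos (convex_Ici 0) hgcont.continuousOn
    intro x hx
    rw [interior_Ici] at hx
    rw [(hderiv x).deriv]
    have : (0:ℝ) < x := hx
    positivity
  have hg0 : g 0 = 0 := by simp [hgdef]
  have hglt : ∀ x : ℝ, 0 ≤ x → g x < 1 := by
    intro x hx
    have h1 : 0 ≤ β₀ * x * Real.exp (-β₀ * x) := by positivity
    have h2 : 0 < Real.exp (-β₀ * x) := Real.exp_pos _
    simp only [hgdef]
    linarith
  have hglim : Tendsto g atTop (nhds 1) := by
    have hbx : Tendsto (fun x : ℝ => β₀ * x) atTop atTop :=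
      Tendsto.const_mul_atTop hβ₀ tendsto_id
    have t1 : Tendsto (fun x : ℝ => β₀ * x * Real.exp (-β₀ * x)) atTop (nhds 0) := by
      rw [show (fun x : ℝ => β₀ * x * Real.exp (-β₀ * x))
          = (fun y : ℝ => y ^ 1 * Real.exp (-y)) ∘ (fun x : ℝ => β₀ * x) by
        ext x; simp [neg_mul]]
      exact (Real.tendsto_pow_mul_exp_neg_atTop_nhds_zero 1).comp hbx
    have t2 : Tendsto (fun x : ℝ => Real.exp (-β₀ * x)) atTop (nhds 0) := by
      rw [show (fun x : ℝ => Real.exp (-β₀ * x))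
          = (fun y : ℝ => Real.exp (-y)) ∘ (fun x : ℝ => β₀ * x) by
        ext x; simp [neg_mul]]
      exact Real.tendsto_exp_neg_atTop_nhds_zero.comp hbx
    have h := (tendsto_const_nhds (x := (1:ℝ)) (f := atTop)).sub t1 |>.sub t2
    convert h using 2
    norm_num
  refine ⟨?_, ?_, ?_, ?_⟩
  · show 1 - Real.exp (-(c * g 0)) = 0
    simp [hg0]
  · intro a ha b hb hab
    show 1 - Real.exp (-(c * g a)) < 1 - Real.exp (-(c * g b))
    have hgab : g a < g b := hgmono ha hb hab
    have : Real.exp (-(c * g b)) < Real.exp (-(c * g a)) := by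
      apply Real.exp_lt_exp.2
      have := mul_lt_mul_of_pos_left hgab hc
      linarith
    linarith
  · intro x hx
    show 1 - Real.exp (-(c * g x)) < 1 - Real.exp (-(2 * Real.pi * lamb * Real.exp (-p) / β₀ ^ 2))
    rw [hceq]
    have hgx := hglt x hx
    have : Real.exp (-c) < Real.exp (-(c * g x)) := by
      apply Real.exp_lt_exp.2
      have := mul_lt_mul_of_pos_left hgx hc
      linarith
    linarith
  · show Tendsto (fun x => 1 - Real.exp (-(c * g x))) atTop
      (nhds (1 - Real.exp (-(2 * Real.pi * lamb * Real.exp (-p) / β₀ ^ 2))))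
    rw [hceq]
    have : Tendsto (fun x => Real.exp (-(c * g x))) atTop (nhds (Real.exp (-c))) := by
      have h1 : Tendsto (fun x => -(c * g x)) atTop (nhds (-(c * 1))) :=
        ((hglim.const_mul c)).neg
      have := (Real.continuous_exp.tendsto _).comp h1
      simpa [Function.comp_def] using this
    simpa using tendsto_const_nhds.sub this
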